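/- arXiv:2501.16055 — 2 statements merged into one kernel-verified Lean document; each statement's English description precedes it below -/
import Mathlib

section
/- Let F = (1/N)∑_{i=1}^N g_i : ℝ^d → ℝ be continuously differentiable, L-smooth and μ-strongly convex (0 < μ ≤ L) with minimiser X_* ∈ ℝ^d, and suppose that every batch function f_ω (ω an n-tuple of distinct indices from {1,…,N}, 1 ≤ n < N) is continuously differentiable, convex and L-smooth. Let σ_*² := E_ω‖∇f_ω(X_*)‖² < ∞, where ω is uniform over n-tuples of distinct indices. Fix a stepsize 0 < h < 1/(2L) and x_0 ∈ ℝ^d, let (ω_k)_{k≥0} be i.i.d. uniform over n-tuples of distinct indices (the Robbins–Monro policy), and define the SGD-RM iterates x_{k+1} = x_k − h∇f_{ω_k}(x_k). Then for every K ∈ ℕ, E‖x_K − X_*‖² ≤ (1−hμ)^K‖x_0 − X_*‖² + 2h σ_*²/μ. -/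
open MeasureTheory ProbabilityTheory

/-- Discrete σ-algebra on the (finite) type of batches. -/
instance batchMeasurableSpace {n N : ℕ} : MeasurableSpace (Fin n ↪ Fin N) := ⊤

section Aux

open Set InnerProductSpace

variable {E : Type*} [NormedAddCommGroup E] [InnerProductSpace ℝ E] [CompleteSpace E]

lemma line_hasDerivAt (f : E → ℝ) (hf : Differentiable ℝ f) (x v : E) (t : ℝ) :
    HasDerivAt (fun s : ℝ => f (x + s • v)) (inner ℝ (gradient f (x + t • v)) v : ℝ) t := by
  have h1 : HasDerivAt (fun s : ℝ => x + s • v) v t := by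
    simpa using (hasDerivAt_id t).smul_const v |>.const_add x
  have h2 : HasFDerivAt f (InnerProductSpace.toDual ℝ E (gradient f (x + t • v))) (x + t • v) :=
    (hf (x + t • v)).hasGradientAt.hasFDerivAt
  have h3 := h2.comp_hasDerivAt t h1
  simp only [InnerProductSpace.toDual_apply_apply] at h3
  exact h3

/-- Descent lemma. -/
lemma descent (f : E → ℝ) (hf : Differentiable ℝ f) (L : ℝ) (hL0 : 0 ≤ L)
    (hL : ∀ a b, ‖gradient f a - gradient f b‖ ≤ L * ‖a - b‖) (x z : E) :
    f z ≤ f x + (inner ℝ (gradient f x) (z - x) : ℝ) + L / 2 * ‖z - x‖ ^ 2 := by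
  set v := z - x with hv
  set φ : ℝ → ℝ := fun t => f x + t * (inner ℝ (gradient f x) v : ℝ) + L / 2 * t ^ 2 * ‖v‖ ^ 2
      - f (x + t • v) with hφ
  have hder : ∀ t : ℝ, HasDerivAt φ
      ((inner ℝ (gradient f x) v : ℝ) + L * t * ‖v‖ ^ 2 - (inner ℝ (gradient f (x + t • v)) v : ℝ)) t := by
    intro t
    have h1 := line_hasDerivAt f hf x v t
    have h2 : HasDerivAt (fun t : ℝ => f x + t * (inner ℝ (gradient f x) v : ℝ)
        + L / 2 * t ^ 2 * ‖v‖ ^ 2) ((inner ℝ (gradient f x) v : ℝ) + L * t * ‖v‖ ^ 2) t := by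
      have : HasDerivAt (fun t : ℝ => t * (inner ℝ (gradient f x) v : ℝ))
          (inner ℝ (gradient f x) v : ℝ) t := by simpa using (hasDerivAt_id t).mul_const _
      have h3 : HasDerivAt (fun t : ℝ => L / 2 * t ^ 2 * ‖v‖ ^ 2) (L * t * ‖v‖ ^ 2) t := by
        have := ((hasDerivAt_pow 2 t).const_mul (L / 2)).mul_const (‖v‖ ^ 2)
        exact this.congr_deriv (by ring)
      exact ((this.const_add (f x)).add h3)
    exact h2.sub h1
  have hmono : MonotoneOn φ (Icc 0 1) := by
    apply monotoneOn_of_deriv_nonneg (convex_Icc 0 1)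
    · exact fun t _ => ((hder t).differentiableAt).continuousAt.continuousWithinAt
    · intro t ht
      exact ((hder t).differentiableAt).differentiableWithinAt
    · intro t ht
      rw [(hder t).deriv]
      simp only [interior_Icc, mem_Ioo] at ht
      have key : (inner ℝ (gradient f (x + t • v)) v : ℝ) - (inner ℝ (gradient f x) v : ℝ)
          ≤ L * t * ‖v‖ ^ 2 := by
        have h1 : (inner ℝ (gradient f (x + t • v)) v : ℝ) - (inner ℝ (gradient f x) v : ℝ)
            = (inner ℝ (gradient f (x + t • v) - gradient f x) v : ℝ) := by
          rw [inner_sub_left]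
        rw [h1]
        calc (inner ℝ (gradient f (x + t • v) - gradient f x) v : ℝ)
            ≤ ‖gradient f (x + t • v) - gradient f x‖ * ‖v‖ := real_inner_le_norm _ _
          _ ≤ (L * ‖(x + t • v) - x‖) * ‖v‖ := by
              gcongr; exact hL _ _
          _ = L * (|t| * ‖v‖) * ‖v‖ := by simp [norm_smul, abs_of_nonneg, mul_assoc]
          _ = L * |t| * ‖v‖ ^ 2 := by ring
          _ ≤ L * t * ‖v‖ ^ 2 := by
              rw [abs_of_nonneg ht.1.le]
      linarith
  have h01 := hmono (left_mem_Icc.mpr one_pos.le) (right_mem_Icc.mpr one_pos.le) one_pos.le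
  simp only [hφ] at h01
  simp only [zero_smul, add_zero, zero_mul, zero_pow, mul_zero] at h01
  have : f (x + (1:ℝ) • v) = f z := by simp [hv]
  rw [this] at h01
  nlinarith [h01]

/-- Cocoercivity for convex smooth functions. -/
lemma coco (f : E → ℝ) (hf : Differentiable ℝ f) (L : ℝ) (hL0 : 0 < L)
    (hL : ∀ a b, ‖gradient f a - gradient f b‖ ≤ L * ‖a - b‖)
    (hconv : ∀ a b, f a ≥ f b + (inner ℝ (gradient f b) (a - b) : ℝ)) (x y : E) :
    ‖gradient f x - gradient f y‖ ^ 2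
      ≤ 2 * L * (f x - f y - (inner ℝ (gradient f y) (x - y) : ℝ)) := by
  set u := gradient f x - gradient f y with hu
  set z := x - (L⁻¹ : ℝ) • u with hz
  have hd := descent f hf L hL0.le hL x z
  have hc := hconv z y
  have hzx : z - x = -(L⁻¹ : ℝ) • u := by rw [hz]; abel_nf; simp [neg_smul]
  have e1 : (inner ℝ (gradient f x) (z - x) : ℝ) = -(L⁻¹ * inner ℝ (gradient f x) u) := by
    rw [hzx, real_inner_smul_right]; ring
  have e2 : ‖z - x‖ ^ 2 = L⁻¹ ^ 2 * ‖u‖ ^ 2 := by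
    rw [hzx, norm_smul]
    simp [abs_of_nonneg (inv_nonneg.mpr hL0.le), mul_pow]
  have e3 : (inner ℝ (gradient f y) (z - y) : ℝ)
      = (inner ℝ (gradient f y) (x - y) : ℝ) - L⁻¹ * inner ℝ (gradient f y) u := by
    have : z - y = (x - y) - (L⁻¹ : ℝ) • u := by rw [hz]; abel
    rw [this, inner_sub_right, real_inner_smul_right]
  have e4 : (inner ℝ (gradient f x) u : ℝ) - (inner ℝ (gradient f y) u : ℝ) = ‖u‖ ^ 2 := by
    rw [← inner_sub_left, ← hu, real_inner_self_eq_norm_sq]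
  rw [e1, e2] at hd
  rw [e3] at hc
  have hLinv : L⁻¹ * L = 1 := inv_mul_cancel₀ hL0.ne'
  have e5 : L⁻¹ * (inner ℝ (gradient f x) u : ℝ) - L⁻¹ * (inner ℝ (gradient f y) u : ℝ)
      = L⁻¹ * ‖u‖ ^ 2 := by linear_combination L⁻¹ * e4
  have e6 : L / 2 * (L⁻¹ ^ 2) = L⁻¹ / 2 := by field_simp
  have key : L⁻¹ / 2 * ‖u‖ ^ 2 ≤ f x - f y - (inner ℝ (gradient f y) (x - y) : ℝ) := by
    nlinarith [hd, hc, e5, e6]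
  have := mul_le_mul_of_nonneg_left key (by positivity : (0:ℝ) ≤ 2 * L)
  calc ‖u‖ ^ 2 = 2 * L * (L⁻¹ / 2 * ‖u‖ ^ 2) := by field_simp
    _ ≤ _ := this


lemma grad_min_zero (F : E → ℝ) (hF : Differentiable ℝ F) (x : E) (hx : ∀ y, F x ≤ F y) :
    gradient F x = 0 := by
  have hmin : IsLocalMin F x := Filter.Eventually.of_forall hx
  have h0 : fderiv ℝ F x = 0 := hmin.fderiv_eq_zero
  have h1 : HasFDerivAt F (toDual ℝ E (gradient F x)) x :=
    (hF x).hasGradientAt.hasFDerivAt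
  have := h1.fderiv
  rw [h0] at this
  simpa using (toDual ℝ E).map_eq_zero_iff.mp this.symm

lemma grad_avg {ι : Type*} [Fintype ι] (f : ι → E → ℝ) (hf : ∀ i, Differentiable ℝ (f i))
    (F : E → ℝ) (a : ℝ) (hFeq : ∀ y, F y = a * ∑ i, f i y) (y : E) :
    gradient F y = a • ∑ i, gradient (f i) y := by
  have h1 : HasFDerivAt (fun z => a * ∑ i, f i z)
      (a • ∑ i, toDual ℝ E (gradient (f i) y)) y := by
    have hs : HasFDerivAt (fun z => ∑ i, f i z) (∑ i, toDual ℝ E (gradient (f i) y)) y :=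
      HasFDerivAt.fun_sum fun i _ => ((hf i) y).hasGradientAt.hasFDerivAt
    simpa [smul_eq_mul] using hs.const_mul a
  have h2 : HasFDerivAt F (a • ∑ i, toDual ℝ E (gradient (f i) y)) y := by
    have : F = fun z => a * ∑ i, f i z := funext hFeq
    rw [this]
    exact h1
  have h3 : HasGradientAt F (a • ∑ i, gradient (f i) y) y := by
    rw [hasGradientAt_iff_hasFDerivAt]
    refine h2.congr_fderiv ?_
    rw [_root_.map_smul, map_sum]
  exact h3.gradient


lemma onestep {B : Type*} [Fintype B] (f : B → E → ℝ) (F : E → ℝ) (Xstar : E)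
    (L μ h σsq : ℝ) (hμ : 0 < μ) (hμL : μ ≤ L) (hh0 : 0 < h) (hh2L : h * (2 * L) < 1)
    (hc0 : 0 < Fintype.card B)
    (havgF : ∀ y, ∑ ω : B, f ω y = (Fintype.card B : ℝ) * F y)
    (havgG : ∀ y, ∑ ω : B, gradient (f ω) y = (Fintype.card B : ℝ) • gradient F y)
    (hsc : ∀ y, (inner ℝ (gradient F y) (y - Xstar) : ℝ) ≥ (F y - F Xstar) + μ / 2 * ‖y - Xstar‖ ^ 2)
    (hcoco : ∀ ω y, ‖gradient (f ω) y - gradient (f ω) Xstar‖ ^ 2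
      ≤ 2 * L * (f ω y - f ω Xstar - (inner ℝ (gradient (f ω) Xstar) (y - Xstar) : ℝ)))
    (hmin : ∀ y, F Xstar ≤ F y)
    (hgrad0 : gradient F Xstar = 0)
    (hσsq : σsq = (Fintype.card B : ℝ)⁻¹ * ∑ ω : B, ‖gradient (f ω) Xstar‖ ^ 2)
    (y : E) :
    (Fintype.card B : ℝ)⁻¹ * ∑ ω : B, ‖(y - h • gradient (f ω) y) - Xstar‖ ^ 2
      ≤ (1 - h * μ) * ‖y - Xstar‖ ^ 2 + 2 * h ^ 2 * σsq := by
  set c := (Fintype.card B : ℝ) with hcdef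
  have hcpos : (0:ℝ) < c := by rw [hcdef]; exact_mod_cast hc0
  set a := y - Xstar with ha
  -- expansion of each term
  have hexp : ∀ ω : B, ‖(y - h • gradient (f ω) y) - Xstar‖ ^ 2
      = ‖a‖ ^ 2 - 2 * h * (inner ℝ (gradient (f ω) y) a : ℝ) + h ^ 2 * ‖gradient (f ω) y‖ ^ 2 := by
    intro ω
    have h1 : (y - h • gradient (f ω) y) - Xstar = a - h • gradient (f ω) y := by
      rw [ha]; abel
    rw [h1, @norm_sub_sq_real, real_inner_smul_right, norm_smul]
    simp [abs_of_nonneg hh0.le, mul_pow, real_inner_comm]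
    ring
  -- sum of inner products
  have hinner : ∑ ω : B, (inner ℝ (gradient (f ω) y) a : ℝ) = c * (inner ℝ (gradient F y) a : ℝ) := by
    rw [← sum_inner, havgG, real_inner_smul_left]
  -- bound on sum of gradient norms
  have hDsum : ∑ ω : B, (f ω y - f ω Xstar - (inner ℝ (gradient (f ω) Xstar) (y - Xstar) : ℝ))
      = c * (F y - F Xstar) := by
    rw [Finset.sum_sub_distrib, Finset.sum_sub_distrib, havgF, havgF, ← sum_inner, havgG,
      hgrad0, smul_zero]
    simp
    ring
  have hgnorm : ∀ ω : B, ‖gradient (f ω) y‖ ^ 2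
      ≤ 2 * ‖gradient (f ω) y - gradient (f ω) Xstar‖ ^ 2 + 2 * ‖gradient (f ω) Xstar‖ ^ 2 := by
    intro ω
    have h1 := norm_add_le (gradient (f ω) y - gradient (f ω) Xstar) (gradient (f ω) Xstar)
    simp only [sub_add_cancel] at h1
    nlinarith [sq_nonneg (‖gradient (f ω) y - gradient (f ω) Xstar‖ - ‖gradient (f ω) Xstar‖),
      norm_nonneg (gradient (f ω) y), norm_nonneg (gradient (f ω) y - gradient (f ω) Xstar),
      norm_nonneg (gradient (f ω) Xstar)]
  have hS : ∑ ω : B, ‖gradient (f ω) y‖ ^ 2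
      ≤ 4 * L * (c * (F y - F Xstar)) + 2 * (c * σsq) := by
    have hσ' : ∑ ω : B, ‖gradient (f ω) Xstar‖ ^ 2 = c * σsq := by
      rw [hσsq]; field_simp
    calc ∑ ω : B, ‖gradient (f ω) y‖ ^ 2
        ≤ ∑ ω : B, (2 * ‖gradient (f ω) y - gradient (f ω) Xstar‖ ^ 2
            + 2 * ‖gradient (f ω) Xstar‖ ^ 2) := Finset.sum_le_sum fun ω _ => hgnorm ω
      _ ≤ ∑ ω : B, (2 * (2 * L * (f ω y - f ω Xstar
            - (inner ℝ (gradient (f ω) Xstar) (y - Xstar) : ℝ)))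
            + 2 * ‖gradient (f ω) Xstar‖ ^ 2) := by
          refine Finset.sum_le_sum fun ω _ => ?_
          have := hcoco ω y
          nlinarith [this]
      _ = 4 * L * (c * (F y - F Xstar)) + 2 * (c * σsq) := by
          rw [Finset.sum_add_distrib]
          have e1 : ∑ ω : B, 2 * (2 * L * (f ω y - f ω Xstar
              - (inner ℝ (gradient (f ω) Xstar) (y - Xstar) : ℝ)))
              = 2 * (2 * L * (c * (F y - F Xstar))) := by
            rw [← Finset.mul_sum, ← Finset.mul_sum, hDsum]
          have e2 : ∑ ω : B, 2 * ‖gradient (f ω) Xstar‖ ^ 2 = 2 * (c * σsq) := by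
            rw [← Finset.mul_sum, hσ']
          rw [e1, e2]
          ring
  -- total
  have htot : ∑ ω : B, ‖(y - h • gradient (f ω) y) - Xstar‖ ^ 2
      = c * ‖a‖ ^ 2 - 2 * h * (c * (inner ℝ (gradient F y) a : ℝ))
        + h ^ 2 * ∑ ω : B, ‖gradient (f ω) y‖ ^ 2 := by
    rw [Finset.sum_congr rfl fun ω _ => hexp ω, Finset.sum_add_distrib, Finset.sum_sub_distrib,
      ← Finset.mul_sum, ← Finset.mul_sum, hinner, Finset.sum_const, nsmul_eq_mul,
      Finset.card_univ, ← hcdef]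
  have hFy : F Xstar ≤ F y := hmin y
  have hscy := hsc y
  have hgap : (0:ℝ) ≤ F y - F Xstar := by linarith
  have hfinal : ∑ ω : B, ‖(y - h • gradient (f ω) y) - Xstar‖ ^ 2
      ≤ c * ((1 - h * μ) * ‖a‖ ^ 2 + 2 * h ^ 2 * σsq) := by
    rw [htot]
    have h2 : h ^ 2 * ∑ ω : B, ‖gradient (f ω) y‖ ^ 2
        ≤ h ^ 2 * (4 * L * (c * (F y - F Xstar)) + 2 * (c * σsq)) := by
      exact mul_le_mul_of_nonneg_left hS (sq_nonneg h)
    have h3 : c * (inner ℝ (gradient F y) a : ℝ)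
        ≥ c * ((F y - F Xstar) + μ / 2 * ‖a‖ ^ 2) :=
      mul_le_mul_of_nonneg_left hscy hcpos.le
    nlinarith [mul_nonneg (mul_nonneg hh0.le hh0.le) (mul_nonneg hcpos.le hgap),
      mul_pos hcpos (mul_pos hh0 hh0), mul_nonneg hcpos.le hgap, hh2L, hh0,
      mul_le_mul_of_nonneg_left hh2L.le (mul_nonneg (mul_nonneg hh0.le hcpos.le) hgap)]
  calc (c : ℝ)⁻¹ * ∑ ω : B, ‖(y - h • gradient (f ω) y) - Xstar‖ ^ 2
      ≤ c⁻¹ * (c * ((1 - h * μ) * ‖a‖ ^ 2 + 2 * h ^ 2 * σsq)) :=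
        mul_le_mul_of_nonneg_left hfinal (inv_nonneg.mpr hcpos.le)
    _ = (1 - h * μ) * ‖a‖ ^ 2 + 2 * h ^ 2 * σsq := by field_simp


end Aux

lemma count_fiber (n N : ℕ) (j : Fin n) (i i' : Fin N) :
    (Finset.univ.filter (fun ω : Fin n ↪ Fin N => ω j = i)).card
      = (Finset.univ.filter (fun ω : Fin n ↪ Fin N => ω j = i')).card := by
  apply Finset.card_equiv (Equiv.embeddingCongr (Equiv.refl (Fin n)) (Equiv.swap i i'))
  intro ω
  simp only [Finset.mem_filter, Finset.mem_univ, true_and, Equiv.embeddingCongr_apply_trans]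
  constructor
  · intro hw
    show (Equiv.swap i i') (ω ((Equiv.refl (Fin n)).symm j)) = i'
    simp [hw]
  · intro hw
    have : (Equiv.swap i i') (ω ((Equiv.refl (Fin n)).symm j)) = i' := hw
    simp only [Equiv.refl_symm, Equiv.refl_apply] at this
    have := (Equiv.swap i i').injective (a₁ := ω j) (a₂ := i) (by simp [this])
    exact this

lemma avg_over_batches (n N : ℕ) (hN : 0 < N) (j : Fin n) (u : Fin N → ℝ) :
    ∑ ω : Fin n ↪ Fin N, u (ω j)
      = (Fintype.card (Fin n ↪ Fin N) : ℝ) / N * ∑ i, u i := by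
  classical
  set c := Fintype.card (Fin n ↪ Fin N) with hc
  set t : Fin N → ℕ := fun i => (Finset.univ.filter (fun ω : Fin n ↪ Fin N => ω j = i)).card
    with ht
  have hsum : ∑ i, t i = c := by
    rw [hc, ← Finset.card_univ, Finset.card_eq_sum_card_fiberwise
      (f := fun ω : Fin n ↪ Fin N => ω j) (t := Finset.univ) (fun _ _ => Finset.mem_univ _)]
  have hconst : ∀ i : Fin N, (t i : ℝ) = c / N := by
    intro i
    have hall : ∀ i', t i' = t i := fun i' => count_fiber n N j i' i
    have : (N : ℕ) * t i = c := by
      rw [← hsum]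
      rw [Finset.sum_congr rfl (fun i' _ => hall i')]
      simp [mul_comm]
    have hNne : (N : ℝ) ≠ 0 := Nat.cast_ne_zero.mpr hN.ne'
    have hr : (N : ℝ) * (t i : ℝ) = c := by exact_mod_cast congrArg (Nat.cast (R := ℝ)) this
    field_simp
    linarith [hr]
  calc ∑ ω : Fin n ↪ Fin N, u (ω j)
      = ∑ i, ∑ ω ∈ Finset.univ.filter (fun ω : Fin n ↪ Fin N => ω j = i), u (ω j) :=
        (Finset.sum_fiberwise_of_maps_to (fun _ _ => Finset.mem_univ _) _).symm
    _ = ∑ i, (t i : ℝ) * u i := by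
        refine Finset.sum_congr rfl fun i _ => ?_
        rw [Finset.sum_congr rfl (fun ω hω => ?_), Finset.sum_const, ht, nsmul_eq_mul]
        simp only [Finset.mem_filter] at hω
        rw [hω.2]
    _ = ∑ i, (c : ℝ) / N * u i := by
        exact Finset.sum_congr rfl fun i _ => by rw [hconst i]
    _ = (c : ℝ) / N * ∑ i, u i := by rw [Finset.mul_sum]


section Prob
open MeasureTheory ProbabilityTheory

variable {Ω B : Type*} [MeasurableSpace Ω] [Fintype B] [m : MeasurableSpace B]
  [MeasurableSingletonClass B]

  [MeasurableSingletonClass B]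

lemma joint_prob (P : Measure Ω) [IsProbabilityMeasure P]
    (W : ℕ → Ω → B) (hWindep : iIndepFun (m := fun _ => m) W P)
    (p : ENNReal) (hWunif : ∀ k b, P {ωp | W k ωp = b} = p)
    (K : ℕ) (w : Fin K → B) :
    P {ωp | ∀ i : Fin K, W i ωp = w i} = p ^ K := by
  classical
  set sets : ℕ → Set B := fun k => if hk : k < K then {w ⟨k, hk⟩} else Set.univ with hsets
  have hmeas : ∀ k ∈ Finset.range K, MeasurableSet (sets k) := by
    intro k _
    by_cases hk : k < K <;> simp [hsets, hk]
  have h1 := hWindep.measure_inter_preimage_eq_mul (Finset.range K) (sets := sets) hmeas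
  have h2 : (⋂ i ∈ Finset.range K, W i ⁻¹' sets i) = {ωp | ∀ i : Fin K, W i ωp = w i} := by
    ext ωp
    simp only [Set.mem_iInter, Finset.mem_range, Set.mem_preimage, Set.mem_setOf_eq]
    constructor
    · intro hC i
      have := hC i i.isLt
      simpa [hsets, i.isLt] using this
    · intro hC i hi
      simpa [hsets, hi] using hC ⟨i, hi⟩
  have h3 : ∀ i ∈ Finset.range K, P (W i ⁻¹' sets i) = p := by
    intro i hi
    rw [Finset.mem_range] at hi
    have : W i ⁻¹' sets i = {ωp | W i ωp = w ⟨i, hi⟩} := by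
      ext ωp; simp [hsets, hi]
    rw [this, hWunif]
  rw [h2] at h1
  rw [h1, Finset.prod_congr rfl h3, Finset.prod_const, Finset.card_range]

lemma integral_comp_joint (P : Measure Ω) [IsProbabilityMeasure P]
    (W : ℕ → Ω → B) (hWmeas : ∀ k, Measurable (W k))
    (K : ℕ) (q : (Fin K → B) → ℝ) :
    ∫ ωp, q (fun i : Fin K => W i ωp) ∂P
      = ∑ w : Fin K → B, (P {ωp | ∀ i : Fin K, W i ωp = w i}).toReal * q w := by
  classical
  set A : (Fin K → B) → Set Ω := fun w => {ωp | ∀ i : Fin K, W i ωp = w i} with hA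
  have hAmeas : ∀ w, MeasurableSet (A w) := by
    intro w
    have : A w = ⋂ i : Fin K, W i ⁻¹' {w i} := by
      ext ωp; simp [hA, Set.mem_iInter]
    rw [this]
    exact MeasurableSet.iInter fun i => (hWmeas i) (measurableSet_singleton _)
  have hpt : ∀ ωp, q (fun i : Fin K => W i ωp)
      = ∑ w : Fin K → B, (A w).indicator (fun _ => q w) ωp := by
    intro ωp
    rw [Finset.sum_eq_single (fun i : Fin K => W i ωp)]
    · simp [hA, Set.indicator_apply]
    · intro w _ hw
      have : ωp ∉ A w := by
        simp only [hA, Set.mem_setOf_eq]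
        intro hcon
        exact hw (funext fun i => (hcon i).symm)
      simp [Set.indicator_apply, this]
    · intro hcon
      exact absurd (Finset.mem_univ _) hcon
  calc ∫ ωp, q (fun i : Fin K => W i ωp) ∂P
      = ∫ ωp, ∑ w : Fin K → B, (A w).indicator (fun _ => q w) ωp ∂P := by
        exact integral_congr_ae (Filter.Eventually.of_forall hpt)
    _ = ∑ w : Fin K → B, ∫ ωp, (A w).indicator (fun _ => q w) ωp ∂P := by
        exact integral_finset_sum _ fun w _ =>
          (integrable_const (q w)).indicator (hAmeas w)
    _ = ∑ w : Fin K → B, (P (A w)).toReal * q w := by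
        refine Finset.sum_congr rfl fun w _ => ?_
        rw [integral_indicator_const _ (hAmeas w), smul_eq_mul, measureReal_def]


end Prob

def chainSGD {E B : Type*} (step : B → E → E) (x0 : E) : (K : ℕ) → (Fin K → B) → E
  | 0, _ => x0
  | (K+1), w => step (w (Fin.last K)) (chainSGD step x0 K (fun i => w i.castSucc))

lemma sum_split {B : Type*} [Fintype B] {E : Type*} [NormedAddCommGroup E]
    (step : B → E → E) (x0 : E) (K : ℕ) (φ : E → ℝ) :
    ∑ w : Fin (K+1) → B, φ (chainSGD step x0 (K+1) w)
      = ∑ w' : Fin K → B, ∑ b : B, φ (step b (chainSGD step x0 K w')) := by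
  classical
  rw [← Equiv.sum_comp (Fin.insertNthEquiv (fun _ => B) (Fin.last K))
      (fun w => φ (chainSGD step x0 (K+1) w))]
  rw [Fintype.sum_prod_type, Finset.sum_comm]
  refine Finset.sum_congr rfl fun w' _ => Finset.sum_congr rfl fun b _ => ?_
  congr 1
  show chainSGD step x0 (K+1) ((Fin.insertNthEquiv (fun _ => B) (Fin.last K)) (b, w')) = _
  have : (Fin.insertNthEquiv (fun _ => B) (Fin.last K)) (b, w') = Fin.snoc w' b := by
    simp [Fin.insertNthEquiv, Fin.insertNth_last']
  rw [this]
  have h2 : (fun i : Fin K => (Fin.snoc w' b : Fin (K+1) → B) i.castSucc) = w' := by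
    funext i; simp
  show step ((Fin.snoc w' b : Fin (K+1) → B) (Fin.last K))
      (chainSGD step x0 K (fun i => (Fin.snoc w' b : Fin (K+1) → B) i.castSucc)) = _
  rw [h2, Fin.snoc_last]


lemma chainSGD_zero {E B : Type*} (step : B → E → E) (x0 : E) (w : Fin 0 → B) :
    chainSGD step x0 0 w = x0 := rfl

lemma chainSGD_succ {E B : Type*} (step : B → E → E) (x0 : E) (K : ℕ) (w : Fin (K+1) → B) :
    chainSGD step x0 (K+1) w
      = step (w (Fin.last K)) (chainSGD step x0 K (fun i => w i.castSucc)) := rfl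

/-- **SGD with the Robbins–Monro policy (Theorem SGD-RM).**
`F = (1/N) ∑ g i : ℝ^d → ℝ` is continuously differentiable, `L`-smooth and `μ`-strongly
convex (`0 < μ ≤ L`) with minimiser `X_*`; each batch function `f ω` (`ω` an `n`-tuple of
distinct indices, `1 ≤ n < N`) is continuously differentiable, convex and `L`-smooth.
`σ_*² = E_ω ‖∇f_ω(X_*)‖²` with `ω` uniform over batches.  With stepsize `0 < h < 1/(2L)`,
i.i.d. uniform batches `W k` and iterates `x (k+1) = x k − h ∇f_{W k}(x k)` started from
the deterministic point `x₀`, we have for every `K`: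
`E ‖x K − X_*‖² ≤ (1 − hμ)^K ‖x₀ − X_*‖² + 2 h σ_*² / μ`. -/
theorem stmt_1 (d N n : ℕ) (hd : 0 < d) (hn : 0 < n) (hnN : n < N)
    (L μ : ℝ) (hμ : 0 < μ) (hμL : μ ≤ L)
    (g : Fin N → EuclideanSpace ℝ (Fin d) → ℝ)
    (F : EuclideanSpace ℝ (Fin d) → ℝ)
    (hFdef : ∀ x, F x = (N : ℝ)⁻¹ * ∑ i, g i x)
    (hFC1 : ContDiff ℝ 1 F)
    (hFL : ∀ x y, ‖gradient F x - gradient F y‖ ≤ L * ‖x - y‖)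
    (hFsc : ∀ x y, F x ≥ F y + (inner ℝ (gradient F y) (x - y) : ℝ) + μ / 2 * ‖x - y‖ ^ 2)
    (Xstar : EuclideanSpace ℝ (Fin d)) (hXstar : ∀ x, F Xstar ≤ F x)
    (f : (Fin n ↪ Fin N) → EuclideanSpace ℝ (Fin d) → ℝ)
    (hfdef : ∀ ω x, f ω x = (n : ℝ)⁻¹ * ∑ j, g (ω j) x)
    (hfC1 : ∀ ω, ContDiff ℝ 1 (f ω))
    (hfconv : ∀ ω x y, f ω x ≥ f ω y + (inner ℝ (gradient (f ω) y) (x - y) : ℝ))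
    (hfL : ∀ ω x y, ‖gradient (f ω) x - gradient (f ω) y‖ ≤ L * ‖x - y‖)
    (σsq : ℝ)
    (hσsq : σsq = (Fintype.card (Fin n ↪ Fin N) : ℝ)⁻¹ *
        ∑ ω : Fin n ↪ Fin N, ‖gradient (f ω) Xstar‖ ^ 2)
    (h : ℝ) (hh0 : 0 < h) (hh : h < 1 / (2 * L))
    (x0 : EuclideanSpace ℝ (Fin d))
    (Ω : Type*) [MeasurableSpace Ω] (P : Measure Ω) [IsProbabilityMeasure P]
    (W : ℕ → Ω → (Fin n ↪ Fin N))
    (hWmeas : ∀ k, Measurable (W k))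
    (hWindep : iIndepFun (m := fun _ => batchMeasurableSpace) W P)
    (hWunif : ∀ k ω₀, P {ωp | W k ωp = ω₀} = (Fintype.card (Fin n ↪ Fin N) : ENNReal)⁻¹)
    (x : ℕ → Ω → EuclideanSpace ℝ (Fin d))
    (hxmeas : ∀ k, Measurable (x k))
    (hx0 : ∀ ωp, x 0 ωp = x0)
    (hxrec : ∀ k ωp, x (k + 1) ωp = x k ωp - h • gradient (f (W k ωp)) (x k ωp)) :
    ∀ K : ℕ, ∫ ωp, ‖x K ωp - Xstar‖ ^ 2 ∂P
      ≤ (1 - h * μ) ^ K * ‖x0 - Xstar‖ ^ 2 + 2 * h * σsq / μ := by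
  classical
  haveI : MeasurableSingletonClass (Fin n ↪ Fin N) :=
    ⟨fun _ => MeasurableSpace.measurableSet_top⟩
  have hL0 : (0:ℝ) < L := lt_of_lt_of_le hμ hμL
  have hc0 : 0 < Fintype.card (Fin n ↪ Fin N) :=
    @Fintype.card_pos _ _ ⟨⟨Fin.castLE hnN.le, Fin.castLE_injective hnN.le⟩⟩
  set c := Fintype.card (Fin n ↪ Fin N) with hc
  have hcR : (0:ℝ) < (c:ℝ) := by exact_mod_cast hc0
  have hcne : (c:ℝ) ≠ 0 := hcR.ne'
  have hN0 : 0 < N := lt_of_le_of_lt (Nat.zero_le n) hnN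
  have hdiffF : Differentiable ℝ F := hFC1.differentiable one_ne_zero
  have hdifff : ∀ ω, Differentiable ℝ (f ω) := fun ω => (hfC1 ω).differentiable one_ne_zero
  have h2L : h * (2 * L) < 1 := by
    have := (lt_div_iff₀ (by positivity : (0:ℝ) < 2*L)).mp hh
    linarith
  -- averages
  have havgF : ∀ y, ∑ ω : Fin n ↪ Fin N, f ω y = (c:ℝ) * F y := by
    intro y
    calc ∑ ω : Fin n ↪ Fin N, f ω y
        = ∑ ω : Fin n ↪ Fin N, ((n:ℝ)⁻¹ * ∑ j, g (ω j) y) :=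
          Finset.sum_congr rfl fun ω _ => hfdef ω y
      _ = (n:ℝ)⁻¹ * ∑ j : Fin n, ∑ ω : Fin n ↪ Fin N, g (ω j) y := by
          rw [← Finset.mul_sum, Finset.sum_comm]
      _ = (n:ℝ)⁻¹ * ∑ j : Fin n, ((c:ℝ)/N * ∑ i, g i y) := by
          rw [Finset.sum_congr rfl fun j _ => avg_over_batches n N hN0 j (fun i => g i y)]
      _ = (c:ℝ) * ((N:ℝ)⁻¹ * ∑ i, g i y) := by
          rw [Finset.sum_const, Finset.card_univ, Fintype.card_fin, nsmul_eq_mul]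
          have hnne : (n:ℝ) ≠ 0 := Nat.cast_ne_zero.mpr hn.ne'
          have hNne : (N:ℝ) ≠ 0 := Nat.cast_ne_zero.mpr hN0.ne'
          field_simp
      _ = (c:ℝ) * F y := by rw [← hFdef]
  have havgG : ∀ y, ∑ ω : Fin n ↪ Fin N, gradient (f ω) y = (c:ℝ) • gradient F y := by
    intro y
    have hFeq : ∀ z, F z = (c:ℝ)⁻¹ * ∑ ω : Fin n ↪ Fin N, f ω z := by
      intro z; rw [havgF z]; field_simp
    rw [grad_avg f hdifff F (c:ℝ)⁻¹ hFeq y, smul_smul]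
    rw [mul_inv_cancel₀ hcne, one_smul]
  have hgrad0 : gradient F Xstar = 0 := grad_min_zero F hdiffF Xstar hXstar
  have hsc : ∀ y, (inner ℝ (gradient F y) (y - Xstar) : ℝ)
      ≥ (F y - F Xstar) + μ/2 * ‖y - Xstar‖^2 := by
    intro y
    have h1 := hFsc Xstar y
    have h2 : Xstar - y = -(y - Xstar) := by abel
    rw [h2, inner_neg_right, norm_neg] at h1
    linarith
  have hcoco : ∀ ω y, ‖gradient (f ω) y - gradient (f ω) Xstar‖^2
      ≤ 2*L*(f ω y - f ω Xstar - (inner ℝ (gradient (f ω) Xstar) (y - Xstar) : ℝ)) := by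
    intro ω y
    exact coco (f ω) (hdifff ω) L hL0 (hfL ω) (fun a b => hfconv ω a b) y Xstar
  have honestep := onestep f F Xstar L μ h σsq hμ hμL hh0 h2L hc0 havgF havgG hsc hcoco
    hXstar hgrad0 hσsq
  -- chain
  set step : (Fin n ↪ Fin N) → EuclideanSpace ℝ (Fin d) → EuclideanSpace ℝ (Fin d) :=
    fun ω y => y - h • gradient (f ω) y with hstep
  have hxchain : ∀ K ωp, x K ωp = chainSGD step x0 K (fun i : Fin K => W i ωp) := by
    intro K
    induction K with
    | zero => intro ωp; rw [hx0, chainSGD_zero]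
    | succ K ih =>
      intro ωp
      rw [hxrec K ωp, ih ωp, chainSGD_succ]
      simp only [Fin.val_last, Fin.coe_castSucc, hstep]
  set e : ℕ → ℝ := fun K => ((c:ℝ)⁻¹)^K * ∑ w : Fin K → (Fin n ↪ Fin N),
      ‖chainSGD step x0 K w - Xstar‖^2 with he
  have hint : ∀ K, ∫ ωp, ‖x K ωp - Xstar‖^2 ∂P = e K := by
    intro K
    have h1 : (fun ωp => ‖x K ωp - Xstar‖^2)
        = fun ωp => (fun w => ‖chainSGD step x0 K w - Xstar‖^2) (fun i : Fin K => W i ωp) := by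
      funext ωp; rw [hxchain K ωp]
    have h4 : (∫ ωp, ‖x K ωp - Xstar‖^2 ∂P)
        = ∫ ωp, (fun w => ‖chainSGD step x0 K w - Xstar‖^2) (fun i : Fin K => W i ωp) ∂P := by
      rw [← h1]
    have h5 := integral_comp_joint P W hWmeas K
      (fun w => ‖chainSGD step x0 K w - Xstar‖^2)
    rw [h4, h5]
    have h2 : ∀ w : Fin K → (Fin n ↪ Fin N),
        (P {ωp | ∀ i : Fin K, W i ωp = w i}).toReal = ((c:ℝ)⁻¹)^K := by
      intro w
      rw [joint_prob P W hWindep ((c:ENNReal))⁻¹ (fun k b => hWunif k b) K w,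
        ENNReal.toReal_pow, ENNReal.toReal_inv, ENNReal.toReal_natCast]
    rw [Finset.sum_congr rfl fun w _ => by rw [h2 w], ← Finset.mul_sum]
  -- recursion
  have hrec : ∀ K, e (K+1) ≤ (1 - h*μ) * e K + 2*h^2*σsq := by
    intro K
    have hsplit := sum_split step x0 K (fun z => ‖z - Xstar‖^2)
    have hbound : ∀ w' : Fin K → (Fin n ↪ Fin N),
        ∑ b : Fin n ↪ Fin N, ‖step b (chainSGD step x0 K w') - Xstar‖^2
          ≤ (c:ℝ) * ((1 - h*μ) * ‖chainSGD step x0 K w' - Xstar‖^2 + 2*h^2*σsq) := by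
      intro w'
      have h3 := honestep (chainSGD step x0 K w')
      calc ∑ b : Fin n ↪ Fin N, ‖step b (chainSGD step x0 K w') - Xstar‖^2
          = (c:ℝ) * ((c:ℝ)⁻¹ * ∑ b : Fin n ↪ Fin N,
              ‖(chainSGD step x0 K w' - h • gradient (f b) (chainSGD step x0 K w')) - Xstar‖^2) := by
            rw [← mul_assoc, mul_inv_cancel₀ hcne, one_mul]
        _ ≤ (c:ℝ) * ((1 - h*μ) * ‖chainSGD step x0 K w' - Xstar‖^2 + 2*h^2*σsq) :=
            mul_le_mul_of_nonneg_left h3 hcR.le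
    have hcard : (Fintype.card (Fin K → (Fin n ↪ Fin N)) : ℝ) = (c:ℝ)^K := by
      rw [Fintype.card_fun, Fintype.card_fin]
      push_cast
      ring
    calc e (K+1)
        = ((c:ℝ)⁻¹)^(K+1) * ∑ w' : Fin K → (Fin n ↪ Fin N), ∑ b : Fin n ↪ Fin N,
            ‖step b (chainSGD step x0 K w') - Xstar‖^2 := by
          simp only [he]
          rw [hsplit]
      _ ≤ ((c:ℝ)⁻¹)^(K+1) * ∑ w' : Fin K → (Fin n ↪ Fin N),
            (c:ℝ) * ((1 - h*μ) * ‖chainSGD step x0 K w' - Xstar‖^2 + 2*h^2*σsq) := by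
          refine mul_le_mul_of_nonneg_left (Finset.sum_le_sum fun w' _ => hbound w') ?_
          positivity
      _ = (1 - h*μ) * e K + 2*h^2*σsq := by
          simp only [he, mul_add, Finset.sum_add_distrib, Finset.sum_const, Finset.card_univ,
            nsmul_eq_mul, ← Finset.mul_sum, hcard]
          have hpow : ((c:ℝ)⁻¹)^(K+1) * (c:ℝ) = ((c:ℝ)⁻¹)^K := by
            rw [pow_succ, mul_assoc, inv_mul_cancel₀ hcne, mul_one]
          have hpow2 : ((c:ℝ)⁻¹)^K * (c:ℝ)^K = 1 := by
            rw [← mul_pow, inv_mul_cancel₀ hcne, one_pow]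
          have hpow3 : ((c:ℝ)⁻¹)^(K+1) * ((c:ℝ)^K * (c:ℝ)) = 1 := by
            rw [mul_comm ((c:ℝ)^K) (c:ℝ), ← mul_assoc, hpow, hpow2]
          linear_combination (((1 - h*μ) * ∑ i : Fin K → Fin n ↪ Fin N,
              ‖chainSGD step x0 K i - Xstar‖ ^ 2) * hpow)
            + (2 * h ^ 2 * σsq) * hpow3
  have hσ0 : 0 ≤ σsq := by
    rw [hσsq]
    exact mul_nonneg (inv_nonneg.mpr (Nat.cast_nonneg _))
      (Finset.sum_nonneg fun ω _ => sq_nonneg _)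
  have hfac : 0 ≤ 1 - h*μ := by
    have h4 : h*μ ≤ h*L := mul_le_mul_of_nonneg_left hμL hh0.le
    linarith
  have hS : (1 - h*μ) * (2*h*σsq/μ) + 2*h^2*σsq = 2*h*σsq/μ := by
    field_simp
    ring
  have hS0 : 0 ≤ 2*h*σsq/μ := by
    apply div_nonneg _ hμ.le
    nlinarith [hσ0, hh0]
  have hmain : ∀ K, e K ≤ (1 - h*μ)^K * ‖x0 - Xstar‖^2 + 2*h*σsq/μ := by
    intro K
    induction K with
    | zero =>
      have he0 : e 0 = ‖x0 - Xstar‖^2 := by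
        rw [he]
        simp only [pow_zero, one_mul]
        rw [Finset.sum_congr rfl fun w _ => by rw [chainSGD_zero], Finset.sum_const,
          Finset.card_univ]
        simp
      rw [he0, pow_zero, one_mul]
      linarith
    | succ K ih =>
      calc e (K+1) ≤ (1 - h*μ) * e K + 2*h^2*σsq := hrec K
        _ ≤ (1 - h*μ) * ((1 - h*μ)^K * ‖x0 - Xstar‖^2 + 2*h*σsq/μ) + 2*h^2*σsq :=
            add_le_add_left (mul_le_mul_of_nonneg_left ih hfac) _
        _ = (1 - h*μ)^(K+1) * ‖x0 - Xstar‖^2 + 2*h*σsq/μ := by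
            rw [mul_add, mul_comm (1 - h*μ) ((1 - h*μ)^K * ‖x0 - Xstar‖^2)]
            rw [add_assoc, hS]
            ring
  intro K
  rw [hint K]
  exact hmain K
end

section
/- Let ȳ ∈ ℝ, σ > 0, V ≥ 0, N ∈ ℕ with N ≥ 1, and 0 < h < 2. Let (ŷ_k)_{k≥0} be i.i.d. square-integrable real random variables with mean ȳ and variance V, and let (ξ_k)_{k≥0} be i.i.d. standard real Gaussians, with the families (ŷ_k) and (ξ_k) mutually independent. Set x_0 = 0 and define the SGLD-RM iterates for the Gaussian model problem by x_{k+1} = (1−h)x_k + h·ŷ_k + σ√(2h/N)·ξ_k. Then for all k ∈ ℕ, Var[x_{k+1}] = V·h²·(1 − (1−h)^{2(k+1)})/(1 − (1−h)²) + (2hσ²/N)·(1 − (1−h)^{2(k+1)})/(1 − (1−h)²), and hence lim_{k→∞} Var[x_k] = V·h/(2−h) + σ²/(N(1 − h/2)). In particular the relative asymptotic variance error is (lim_k Var[x_k] − σ²/N)/(σ²/N) = h·N·V/(σ²(2−h)) + h/(2−h). -/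
open MeasureTheory ProbabilityTheory Filter Real
open scoped ENNReal NNReal

lemma exp_neg_sq_half_eq (x : ℝ) : Real.exp (-x^2/2) = Real.exp (-(1/2 : ℝ) * x^2) := by
  congr 1; ring

lemma int_exp : Integrable (fun x : ℝ => Real.exp (-x^2/2)) := by
  simp_rw [exp_neg_sq_half_eq]
  exact integrable_exp_neg_mul_sq (by norm_num)

lemma int_x_exp : Integrable (fun x : ℝ => x * Real.exp (-x^2/2)) := by
  simp_rw [exp_neg_sq_half_eq]
  exact integrable_mul_exp_neg_mul_sq (by norm_num)

lemma int_x2_exp : Integrable (fun x : ℝ => x^2 * Real.exp (-x^2/2)) := by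
  have this := integrable_rpow_mul_exp_neg_mul_sq (b := (1/2 : ℝ)) (by norm_num) (s := 2) (by norm_num)
  have heq : (fun x : ℝ => x ^ (2:ℝ) * Real.exp (-(1/2:ℝ) * x^2))
      = fun x : ℝ => x ^ 2 * Real.exp (-x^2/2) := by
    funext x
    rw [show ((2:ℝ)) = ((2:ℕ):ℝ) by norm_num, Real.rpow_natCast]
    norm_num [exp_neg_sq_half_eq]
  exact heq ▸ this

lemma deriv_negexp (x : ℝ) :
    HasDerivAt (fun x : ℝ => -Real.exp (-x^2/2)) (x * Real.exp (-x^2/2)) x := by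
  have h1 : HasDerivAt (fun x : ℝ => -x^2/2) (-x) x := by
    have := ((hasDerivAt_pow 2 x).neg.div_const 2)
    simpa using this.congr_deriv (by ring)
  have := (h1.exp).neg
  exact this.congr_deriv (by ring)

lemma arg_tendsto_top : Tendsto (fun x : ℝ => -x^2/2) atTop atBot := by
  have hsq : Tendsto (fun x : ℝ => x^2) atTop atTop := tendsto_pow_atTop two_ne_zero
  exact (tendsto_neg_atTop_atBot.comp hsq).atBot_div_const (by norm_num)

lemma arg_tendsto_bot : Tendsto (fun x : ℝ => -x^2/2) atBot atBot := by
  have hsq : Tendsto (fun x : ℝ => x^2) atBot atTop := by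
    have hcomp := (tendsto_pow_atTop (n := 2) two_ne_zero).comp
      (tendsto_neg_atBot_atTop (G := ℝ))
    have heq : (fun y : ℝ => y ^ 2) ∘ (fun x : ℝ => -x) = fun x : ℝ => x ^ 2 := by
      funext x; simp [Function.comp, neg_sq]
    rwa [heq] at hcomp
  exact (tendsto_neg_atTop_atBot.comp hsq).atBot_div_const (by norm_num)

lemma tendsto_exp_bot : Tendsto (fun x : ℝ => -Real.exp (-x^2/2)) atBot (nhds 0) := by
  have := (Real.tendsto_exp_atBot).comp arg_tendsto_bot
  simpa using this.neg

lemma tendsto_exp_top : Tendsto (fun x : ℝ => -Real.exp (-x^2/2)) atTop (nhds 0) := by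
  have := (Real.tendsto_exp_atBot).comp arg_tendsto_top
  simpa using this.neg

lemma integral_x_exp : ∫ x : ℝ, x * Real.exp (-x^2/2) = 0 := by
  have := integral_of_hasDerivAt_of_tendsto (f := fun x : ℝ => -Real.exp (-x^2/2))
    (f' := fun x => x * Real.exp (-x^2/2)) deriv_negexp int_x_exp tendsto_exp_bot tendsto_exp_top
  simpa using this

lemma integral_exp_eq : ∫ x : ℝ, Real.exp (-x^2/2) = Real.sqrt (2 * Real.pi) := by
  simp_rw [exp_neg_sq_half_eq]
  rw [integral_gaussian]
  rw [show (π / (1/2:ℝ)) = 2 * π by ring]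

lemma integral_x2_exp : ∫ x : ℝ, x^2 * Real.exp (-x^2/2) = Real.sqrt (2 * Real.pi) := by
  have hu : ∀ x : ℝ, HasDerivAt (fun y : ℝ => y) 1 x := fun x => hasDerivAt_id x
  have h1 : Integrable ((fun y : ℝ => y) * fun y => y * Real.exp (-y^2/2)) :=
    int_x2_exp.congr (Filter.Eventually.of_forall fun x => by simp only [Pi.mul_apply, Pi.neg_apply]; ring)
  have h2 : Integrable ((fun _ : ℝ => (1:ℝ)) * fun y => -Real.exp (-y^2/2)) :=
    int_exp.neg.congr (Filter.Eventually.of_forall fun x => by simp [Pi.mul_apply, Pi.neg_apply])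
  have h3 : Integrable ((fun y : ℝ => y) * fun y => -Real.exp (-y^2/2)) :=
    int_x_exp.neg.congr (Filter.Eventually.of_forall fun x => by simp only [Pi.mul_apply, Pi.neg_apply]; ring)
  have key := integral_mul_deriv_eq_deriv_mul_of_integrable (u := fun y : ℝ => y)
    (v := fun y : ℝ => -Real.exp (-y^2/2)) (u' := fun _ => 1)
    (v' := fun y => y * Real.exp (-y^2/2)) (fun x _ => hu x) (fun x _ => deriv_negexp x) h1 h2 h3
  simp only [one_mul, mul_neg, integral_neg, neg_neg] at key
  have hx : ∀ x : ℝ, x^2 * Real.exp (-x^2/2) = x * (x * Real.exp (-x^2/2)) := fun x => by ring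
  simp_rw [hx]
  rw [key, integral_exp_eq]

lemma pdf01 (x : ℝ) : gaussianPDFReal 0 1 x = (Real.sqrt (2*π))⁻¹ * Real.exp (-x^2/2) := by
  simp [gaussianPDFReal]

lemma integral_gauss01 (g : ℝ → ℝ) :
    ∫ x, g x ∂(gaussianReal 0 1) = ∫ x, gaussianPDFReal 0 1 x * g x := by
  rw [gaussianReal_of_var_ne_zero 0 one_ne_zero]
  rw [show gaussianPDF 0 1 = fun x => ((Real.toNNReal (gaussianPDFReal 0 1 x) : ℝ≥0) : ℝ≥0∞)
    from rfl]
  rw [integral_withDensity_eq_integral_smul ((measurable_gaussianPDFReal 0 1).real_toNNReal) g]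
  congr 1; funext x
  rw [NNReal.smul_def, smul_eq_mul, Real.coe_toNNReal _ (gaussianPDFReal_nonneg _ _ _)]

lemma integrable_gauss01_iff (g : ℝ → ℝ) (hg : Measurable g) :
    Integrable g (gaussianReal 0 1) ↔ Integrable (fun x => g x * gaussianPDFReal 0 1 x) := by
  rw [gaussianReal_of_var_ne_zero 0 one_ne_zero,
    integrable_withDensity_iff (measurable_gaussianPDF 0 1)
      (ae_of_all _ fun x => ENNReal.ofReal_lt_top)]
  refine integrable_congr (ae_of_all _ fun x => ?_)
  simp only [gaussianPDF]
  rw [ENNReal.toReal_ofReal (gaussianPDFReal_nonneg _ _ _)]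

lemma memL2_gauss : MemLp (id : ℝ → ℝ) 2 (gaussianReal 0 1) := by
  rw [memLp_two_iff_integrable_sq aestronglyMeasurable_id]
  rw [integrable_gauss01_iff _ (measurable_id.pow_const 2)]
  have : (fun x : ℝ => (id x)^2 * gaussianPDFReal 0 1 x)
      = fun x => (Real.sqrt (2*π))⁻¹ * (x^2 * Real.exp (-x^2/2)) := by
    funext x; rw [pdf01]; simp only [id_eq]; ring
  rw [this]
  exact int_x2_exp.const_mul _

lemma integral_id_gauss : ∫ x, x ∂(gaussianReal 0 1) = 0 := by
  rw [integral_gauss01 (fun x => x)]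
  have : (fun x : ℝ => gaussianPDFReal 0 1 x * x)
      = fun x => (Real.sqrt (2*π))⁻¹ * (x * Real.exp (-x^2/2)) := by
    funext x; rw [pdf01]; ring
  rw [this, integral_const_mul, integral_x_exp, mul_zero]

lemma integral_sq_gauss : ∫ x, x^2 ∂(gaussianReal 0 1) = 1 := by
  rw [integral_gauss01 (fun x => x^2)]
  have : (fun x : ℝ => gaussianPDFReal 0 1 x * x^2)
      = fun x => (Real.sqrt (2*π))⁻¹ * (x^2 * Real.exp (-x^2/2)) := by
    funext x; rw [pdf01]; ring
  rw [this, integral_const_mul, integral_x2_exp]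
  exact inv_mul_cancel₀ (ne_of_gt (Real.sqrt_pos.mpr (by positivity)))

noncomputable def sgldG (a b c : ℝ) : ℕ → (ℕ → ℝ) → (ℕ → ℝ) → ℝ
  | 0, _, _ => 0
  | k+1, ys, zs => a * sgldG a b c k ys zs + b * ys k + c * zs k

lemma sgldG_measurable (a b c : ℝ) (k : ℕ) :
    Measurable (fun p : (ℕ → ℝ) × (ℕ → ℝ) => sgldG a b c k p.1 p.2) := by
  induction k with
  | zero => simpa [sgldG] using measurable_const
  | succ k ih =>
    simp only [sgldG]
    exact ((ih.const_mul a).add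
      (((measurable_pi_apply k).comp measurable_fst).const_mul b)).add
      (((measurable_pi_apply k).comp measurable_snd).const_mul c)

lemma sgldG_congr (a b c : ℝ) (k : ℕ) {ys ys' zs zs' : ℕ → ℝ}
    (hy : ∀ i < k, ys i = ys' i) (hz : ∀ i < k, zs i = zs' i) :
    sgldG a b c k ys zs = sgldG a b c k ys' zs' := by
  induction k with
  | zero => simp [sgldG]
  | succ k ih =>
    simp only [sgldG]
    rw [ih (fun i hi => hy i (hi.trans (Nat.lt_succ_self k)))
        (fun i hi => hz i (hi.trans (Nat.lt_succ_self k))),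
      hy k (Nat.lt_succ_self k), hz k (Nat.lt_succ_self k)]

/-- **SGLD-RM for the 1D Gaussian model problem.**
Let `ȳ ∈ ℝ`, `σ > 0`, `V ≥ 0`, `N ≥ 1`, `0 < h < 2`.  Let `(ŷ_k)` be i.i.d.
square-integrable with mean `ȳ` and variance `V` and `(ξ_k)` i.i.d. standard Gaussians,
the two families mutually independent.  With `x₀ = 0` and
`x_{k+1} = (1−h) x_k + h ŷ_k + σ √(2h/N) ξ_k`, for all `k`
`Var[x_{k+1}] = V h² (1 − (1−h)^{2(k+1)})/(1 − (1−h)²) + (2hσ²/N)(1 − (1−h)^{2(k+1)})/(1 − (1−h)²)`,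
hence `Var[x_k] → V h/(2−h) + σ²/(N(1−h/2))`, and the relative asymptotic variance error
is `(lim Var − σ²/N)/(σ²/N) = h N V/(σ²(2−h)) + h/(2−h)`. -/
theorem stmt_11 (ybar σ V : ℝ) (hσ : 0 < σ) (hV : 0 ≤ V) (N : ℕ) (hN : 1 ≤ N)
    (h : ℝ) (hh0 : 0 < h) (hh2 : h < 2)
    (Ω : Type*) [MeasurableSpace Ω] (P : Measure Ω) [IsProbabilityMeasure P]
    (yhat : ℕ → Ω → ℝ) (hyhatmeas : ∀ k, Measurable (yhat k))
    (ξ : ℕ → Ω → ℝ) (hξmeas : ∀ k, Measurable (ξ k))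
    -- the family `(ŷ_0, ŷ_1, …, ξ_0, ξ_1, …)` is (jointly) mutually independent
    (hindep : iIndepFun
      (Sum.elim yhat ξ) P)
    (hyhatL2 : ∀ k, MemLp (yhat k) 2 P)
    (hyhatiid : ∀ k, Measure.map (yhat k) P = Measure.map (yhat 0) P)
    (hyhatmean : ∀ k, ∫ ωp, yhat k ωp ∂P = ybar)
    (hyhatvar : ∀ k, variance (yhat k) P = V)
    (hξlaw : ∀ k, Measure.map (ξ k) P = gaussianReal 0 1)
    (x : ℕ → Ω → ℝ)
    (hx0 : ∀ ωp, x 0 ωp = 0)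
    (hxrec : ∀ k ωp, x (k + 1) ωp
      = (1 - h) * x k ωp + h * yhat k ωp + σ * Real.sqrt (2 * h / N) * ξ k ωp) :
    (∀ k, variance (x (k + 1)) P
        = V * h ^ 2 * (1 - (1 - h) ^ (2 * (k + 1))) / (1 - (1 - h) ^ 2)
          + (2 * h * σ ^ 2 / N) * (1 - (1 - h) ^ (2 * (k + 1))) / (1 - (1 - h) ^ 2)) ∧
    Tendsto (fun k => variance (x k) P) atTop
      (nhds (V * h / (2 - h) + σ ^ 2 / (N * (1 - h / 2)))) ∧
    ((V * h / (2 - h) + σ ^ 2 / (N * (1 - h / 2))) - σ ^ 2 / N) / (σ ^ 2 / N)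
      = h * N * V / (σ ^ 2 * (2 - h)) + h / (2 - h) := by
  classical
  set c : ℝ := σ * Real.sqrt (2 * h / N) with hcdef
  have hNpos : (0:ℝ) < N := by exact_mod_cast Nat.lt_of_lt_of_le Nat.zero_lt_one hN
  have hc2 : c^2 = σ^2 * (2*h/N) := by
    rw [hcdef, mul_pow, Real.sq_sqrt (by positivity)]
  -- measurability of the joint family
  have hfmeas : ∀ i, Measurable (Sum.elim yhat ξ i) := by
    rintro (i | i)
    · exact hyhatmeas i
    · exact hξmeas i
  -- moments of ξ
  have hξL2 : ∀ k, MemLp (ξ k) 2 P := by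
    intro k
    have h1 := memL2_gauss
    rw [← hξlaw k] at h1
    exact (memLp_map_measure_iff aestronglyMeasurable_id (hξmeas k).aemeasurable).mp h1
  have hξmean : ∀ k, ∫ ω, ξ k ω ∂P = 0 := by
    intro k
    have h1 : ∫ ω, ξ k ω ∂P = ∫ y, y ∂(Measure.map (ξ k) P) :=
      (integral_map (hξmeas k).aemeasurable aestronglyMeasurable_id).symm
    rw [h1, hξlaw k, integral_id_gauss]
  have hξsq : ∀ k, ∫ ω, (ξ k ω)^2 ∂P = 1 := by
    intro k
    have h1 : ∫ ω, (ξ k ω)^2 ∂P = ∫ y, y^2 ∂(Measure.map (ξ k) P) :=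
      (integral_map (hξmeas k).aemeasurable
        (measurable_id.pow_const 2).aestronglyMeasurable).symm
    rw [h1, hξlaw k, integral_sq_gauss]
  have hξvar : ∀ k, variance (ξ k) P = 1 := by
    intro k
    rw [variance_eq_sub (hξL2 k)]
    have h2 : (∫ ω, (ξ k ^ 2) ω ∂P) = 1 := by
      rw [show (ξ k ^ 2) = fun ω => (ξ k ω)^2 from rfl]
      exact hξsq k
    rw [h2, hξmean k]
    norm_num
  -- representation of x
  have hxg : ∀ k ω, x k ω = sgldG (1-h) h c k (fun i => yhat i ω) (fun i => ξ i ω) := by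
    intro k
    induction k with
    | zero => intro ω; simp [hx0, sgldG]
    | succ k ih =>
      intro ω
      rw [hxrec k ω, ih ω]
      simp only [sgldG, hcdef]
  -- L² bounds
  have hxL2 : ∀ k, MemLp (x k) 2 P := by
    intro k
    induction k with
    | zero =>
      rw [show x 0 = (0 : Ω → ℝ) from funext hx0]
      exact memLp_const 0
    | succ k ih =>
      have hx1 : x (k+1) = fun ω => ((1-h) * x k ω + h * yhat k ω) + c * ξ k ω :=
        funext fun ω => hxrec k ω
      rw [hx1]
      exact ((ih.const_mul _).add ((hyhatL2 k).const_mul _)).add ((hξL2 k).const_mul _)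
  -- independence of x k and the innovation
  have hindepstep : ∀ k, IndepFun (x k) (fun ω => h * yhat k ω + c * ξ k ω) P := by
    intro k
    set S : Finset (ℕ ⊕ ℕ) := ((Finset.range k).image Sum.inl) ∪ ((Finset.range k).image Sum.inr)
      with hSdef
    set T : Finset (ℕ ⊕ ℕ) := {Sum.inl k, Sum.inr k} with hTdef
    have hST : Disjoint S T := by
      rw [Finset.disjoint_left]
      rintro a ha hat
      simp only [hSdef, Finset.mem_union, Finset.mem_image, Finset.mem_range] at ha
      simp only [hTdef, Finset.mem_insert, Finset.mem_singleton] at hat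
      rcases ha with ⟨i, hi, rfl⟩ | ⟨i, hi, rfl⟩ <;> rcases hat with h' | h' <;> simp_all
    have base := hindep.indepFun_finset S T hST hfmeas
    have hinlmem : Sum.inl k ∈ T := by simp [hTdef]
    have hinrmem : Sum.inr k ∈ T := by simp [hTdef]
    set Φ : ((i : S) → ℝ) → ℝ := fun v => sgldG (1-h) h c k
        (fun i => if hi : Sum.inl i ∈ S then v ⟨Sum.inl i, hi⟩ else 0)
        (fun i => if hi : Sum.inr i ∈ S then v ⟨Sum.inr i, hi⟩ else 0) with hΦdef
    have hΦ : Measurable Φ := by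
      have h1 : Measurable (fun (v : (i : S) → ℝ) (i : ℕ) =>
          if hi : Sum.inl i ∈ S then v ⟨Sum.inl i, hi⟩ else 0) := by
        refine measurable_pi_lambda _ fun i => ?_
        by_cases hi : Sum.inl i ∈ S
        · simp only [dif_pos hi]; exact measurable_pi_apply _
        · simp only [dif_neg hi]; exact measurable_const
      have h2 : Measurable (fun (v : (i : S) → ℝ) (i : ℕ) =>
          if hi : Sum.inr i ∈ S then v ⟨Sum.inr i, hi⟩ else 0) := by
        refine measurable_pi_lambda _ fun i => ?_
        by_cases hi : Sum.inr i ∈ S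
        · simp only [dif_pos hi]; exact measurable_pi_apply _
        · simp only [dif_neg hi]; exact measurable_const
      exact (sgldG_measurable _ _ _ _).comp (h1.prodMk h2)
    set Ψ : ((i : T) → ℝ) → ℝ := fun v =>
      h * v ⟨Sum.inl k, hinlmem⟩ + c * v ⟨Sum.inr k, hinrmem⟩ with hΨdef
    have hΨ : Measurable Ψ := by
      rw [hΨdef]
      fun_prop
    have hcomp := base.comp hΦ hΨ
    have hxeq : x k = Φ ∘ (fun a (i : S) => Sum.elim yhat ξ i a) := by
      funext ω
      rw [hxg k ω]
      simp only [Function.comp, hΦdef]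
      refine sgldG_congr _ _ _ _ (fun i hi => ?_) (fun i hi => ?_)
      · have hm : Sum.inl i ∈ S := by
          simp only [hSdef, Finset.mem_union, Finset.mem_image, Finset.mem_range]
          exact Or.inl ⟨i, hi, rfl⟩
        rw [dif_pos hm]
        rfl
      · have hm : Sum.inr i ∈ S := by
          simp only [hSdef, Finset.mem_union, Finset.mem_image, Finset.mem_range]
          exact Or.inr ⟨i, hi, rfl⟩
        rw [dif_pos hm]
        rfl
    have hBeq : (fun ω => h * yhat k ω + c * ξ k ω)
        = Ψ ∘ (fun a (i : T) => Sum.elim yhat ξ i a) := rfl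
    rw [hxeq, hBeq]
    exact hcomp
  -- one-step variance recursion
  have hvar_rec : ∀ k, variance (x (k+1)) P
      = (1-h)^2 * variance (x k) P + (h^2 * V + c^2) := by
    intro k
    have hxe : x (k+1) = (fun ω => (1-h) * x k ω)
        + ((fun ω => h * yhat k ω) + (fun ω => c * ξ k ω)) := by
      funext ω
      simp only [Pi.add_apply]
      rw [hxrec k ω]
      ring
    have hA : MemLp (fun ω => (1-h) * x k ω) 2 P := (hxL2 k).const_mul _
    have hB1 : MemLp (fun ω => h * yhat k ω) 2 P := (hyhatL2 k).const_mul _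
    have hB2 : MemLp (fun ω => c * ξ k ω) 2 P := (hξL2 k).const_mul _
    have hindAB : IndepFun (fun ω => (1-h) * x k ω)
        ((fun ω => h * yhat k ω) + (fun ω => c * ξ k ω)) P :=
      (hindepstep k).comp (measurable_const_mul (1-h)) measurable_id
    rw [hxe, IndepFun.variance_add hA (hB1.add hB2) hindAB]
    have hyξ : IndepFun (yhat k) (ξ k) P :=
      hindep.indepFun (show (Sum.inl k : ℕ ⊕ ℕ) ≠ Sum.inr k by simp)
    have hyξ' : IndepFun (fun ω => h * yhat k ω) (fun ω => c * ξ k ω) P :=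
      hyξ.comp (measurable_const_mul h) (measurable_const_mul c)
    rw [IndepFun.variance_add hB1 hB2 hyξ', variance_const_mul, variance_const_mul, variance_const_mul,
      hyhatvar k, hξvar k]
    ring
  -- closed form
  have h2h : (0:ℝ) < 2 - h := by linarith
  have hD : 1 - (1-h)^2 = h*(2-h) := by ring
  have hDpos : (0:ℝ) < 1 - (1-h)^2 := by rw [hD]; exact mul_pos hh0 h2h
  have hDne : (1 - (1-h)^2) ≠ 0 := ne_of_gt hDpos
  have hNne : (N:ℝ) ≠ 0 := ne_of_gt hNpos
  have hvar0 : variance (x 0) P = 0 := by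
    rw [show x 0 = (0 : Ω → ℝ) from funext hx0]
    exact variance_zero P
  have main1 : ∀ k, variance (x (k + 1)) P
      = V * h ^ 2 * (1 - (1 - h) ^ (2 * (k + 1))) / (1 - (1 - h) ^ 2)
        + (2 * h * σ ^ 2 / N) * (1 - (1 - h) ^ (2 * (k + 1))) / (1 - (1 - h) ^ 2) := by
    intro k
    induction k with
    | zero =>
      rw [hvar_rec 0, hvar0, hc2]
      field_simp
      try ring
    | succ k ih =>
      rw [hvar_rec (k+1), ih, hc2]
      have hpowsplit : (1-h) ^ (2 * (k + 1 + 1)) = (1-h) ^ (2 * (k + 1)) * (1-h)^2 := by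
        rw [← pow_add]
        congr 1
        try ring
      rw [hpowsplit]
      field_simp
      try ring
  refine ⟨main1, ?_, ?_⟩
  · -- the limit
    have hrlt : (1-h)^2 < 1 := by nlinarith
    have hpow : Tendsto (fun k : ℕ => ((1-h)^2)^k) atTop (nhds 0) :=
      tendsto_pow_atTop_nhds_zero_of_lt_one (sq_nonneg _) hrlt
    have h1 : Tendsto (fun k : ℕ => (1-h) ^ (2 * (k+1))) atTop (nhds 0) := by
      simp_rw [pow_mul]
      exact hpow.comp (tendsto_add_atTop_nat 1)
    have htends : Tendsto (fun k : ℕ =>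
        V * h ^ 2 * (1 - (1 - h) ^ (2 * (k + 1))) / (1 - (1 - h) ^ 2)
          + (2 * h * σ ^ 2 / N) * (1 - (1 - h) ^ (2 * (k + 1))) / (1 - (1 - h) ^ 2))
        atTop (nhds (V * h ^ 2 * (1 - 0) / (1 - (1 - h) ^ 2)
          + (2 * h * σ ^ 2 / N) * (1 - 0) / (1 - (1 - h) ^ 2))) := by
      exact (((tendsto_const_nhds.sub h1).const_mul (V * h ^ 2)).div_const _).add
        (((tendsto_const_nhds.sub h1).const_mul (2 * h * σ ^ 2 / N)).div_const _)
    have hval : V * h ^ 2 * (1 - 0) / (1 - (1 - h) ^ 2)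
        + (2 * h * σ ^ 2 / N) * (1 - 0) / (1 - (1 - h) ^ 2)
        = V * h / (2 - h) + σ ^ 2 / (N * (1 - h / 2)) := by
      rw [hD]
      have : (1:ℝ) - h/2 ≠ 0 := by
        intro hcon
        apply ne_of_gt h2h
        linarith
      field_simp
      ring
    rw [hval] at htends
    rw [← tendsto_add_atTop_iff_nat 1]
    exact htends.congr fun k => (main1 k).symm
  · -- the relative error identity
    have hσne : σ ≠ 0 := ne_of_gt hσ
    have h2hne : (2:ℝ) - h ≠ 0 := ne_of_gt h2h
    have hhalf : (1:ℝ) - h/2 ≠ 0 := by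
      intro hcon
      apply h2hne
      linarith
    field_simp
    ring
end
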